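/- Let N ≥ 7 be an integer. Then γ₂(t) → −∞ as t → 0⁺ and γ₂(1/√2) > 0. Consequently, since γ₂ is strictly increasing on (0,1), there exists a unique t* ∈ (0, 1/√2) such that γ₂(t*) = 0, and γ₂(t) > 0 for all t ∈ (t*,1). -/
import Mathlib

set_option maxHeartbeats 1000000

open Real Filter Set Topology

/-- `γ₂(t) = (1−t²)^{-(N−2)} − 2·(√2·t)^{-(N−2)} + 2·(t⁴+1)^{-(N−2)/2} − (2t)^{-(N−2)} + (t²+1)^{-(N−2)}`. -/
noncomputable def gamma2 (N : ℕ) (t : ℝ) : ℝ :=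
  (1 - t ^ 2) ^ (-((N : ℝ) - 2)) - 2 * (Real.sqrt 2 * t) ^ (-((N : ℝ) - 2)) +
    2 * (t ^ 4 + 1) ^ (-((N : ℝ) - 2) / 2) - (2 * t) ^ (-((N : ℝ) - 2)) +
    (t ^ 2 + 1) ^ (-((N : ℝ) - 2))

private lemma sqrt2_pos : (0:ℝ) < Real.sqrt 2 := Real.sqrt_pos.mpr two_pos

private lemma one_lt_sqrt2 : (1:ℝ) < Real.sqrt 2 := by
  nlinarith [Real.sq_sqrt (by norm_num : (0:ℝ) ≤ 2), Real.sqrt_nonneg 2]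

private lemma alpha_ge (N : ℕ) (hN : 7 ≤ N) : (5:ℝ) ≤ (N : ℝ) - 2 := by
  have : (7:ℝ) ≤ (N:ℝ) := by exact_mod_cast hN
  linarith

private lemma gamma2_continuousOn (N : ℕ) : ContinuousOn (gamma2 N) (Ioo 0 1) := by
  have c1 : ContinuousOn (fun t : ℝ => (1 - t ^ 2) ^ (-((N : ℝ) - 2))) (Ioo 0 1) :=
    ContinuousOn.rpow_const (by fun_prop) (fun x hx => Or.inl (by nlinarith [hx.1, hx.2]))
  have c2 : ContinuousOn (fun t : ℝ => (Real.sqrt 2 * t) ^ (-((N : ℝ) - 2))) (Ioo 0 1) :=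
    ContinuousOn.rpow_const (by fun_prop)
      (fun x hx => Or.inl (ne_of_gt (mul_pos sqrt2_pos hx.1)))
  have c3 : ContinuousOn (fun t : ℝ => (t ^ 4 + 1) ^ (-((N : ℝ) - 2) / 2)) (Ioo 0 1) :=
    ContinuousOn.rpow_const (by fun_prop) (fun x hx => Or.inl (by positivity))
  have c4 : ContinuousOn (fun t : ℝ => (2 * t) ^ (-((N : ℝ) - 2))) (Ioo 0 1) :=
    ContinuousOn.rpow_const (by fun_prop) (fun x hx => Or.inl (by nlinarith [hx.1]))
  have c5 : ContinuousOn (fun t : ℝ => (t ^ 2 + 1) ^ (-((N : ℝ) - 2))) (Ioo 0 1) :=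
    ContinuousOn.rpow_const (by fun_prop) (fun x hx => Or.inl (by positivity))
  exact ((((c1.sub (continuousOn_const.mul c2)).add (continuousOn_const.mul c3)).sub c4).add c5)

private lemma gamma2_strictMonoOn (N : ℕ) (hN : 7 ≤ N) :
    StrictMonoOn (gamma2 N) (Ioo 0 1) := by
  have ha : (5:ℝ) ≤ (N : ℝ) - 2 := alpha_ge N hN
  set a : ℝ := (N : ℝ) - 2 with ha_def
  have ha0 : (0:ℝ) < a := by linarith
  apply strictMonoOn_of_deriv_pos (convex_Ioo 0 1) (gamma2_continuousOn N)
  intro t ht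
  rw [interior_Ioo] at ht
  obtain ⟨ht0, ht1⟩ := ht
  have h1t : (0:ℝ) < 1 - t ^ 2 := by nlinarith
  have hst : (0:ℝ) < Real.sqrt 2 * t := mul_pos sqrt2_pos ht0
  have h4t : (0:ℝ) < t ^ 4 + 1 := by positivity
  have h2t : (0:ℝ) < 2 * t := by linarith
  have h2t1 : (0:ℝ) < t ^ 2 + 1 := by positivity
  have hb1 : HasDerivAt (fun s : ℝ => 1 - s ^ 2) (-(2*t)) t := by
    simpa using (hasDerivAt_pow 2 t).const_sub 1
  have hb2 : HasDerivAt (fun s : ℝ => Real.sqrt 2 * s) (Real.sqrt 2) t := by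
    simpa using (hasDerivAt_id t).const_mul (Real.sqrt 2)
  have hb3 : HasDerivAt (fun s : ℝ => s ^ 4 + 1) (4*t^3) t := by
    simpa using (hasDerivAt_pow 4 t).add_const 1
  have hb4 : HasDerivAt (fun s : ℝ => 2 * s) (2:ℝ) t := by
    simpa using (hasDerivAt_id t).const_mul (2:ℝ)
  have hb5 : HasDerivAt (fun s : ℝ => s ^ 2 + 1) (2*t) t := by
    simpa using (hasDerivAt_pow 2 t).add_const 1
  have h1 := hb1.rpow_const (p := -a) (Or.inl (ne_of_gt h1t))
  have h2 := hb2.rpow_const (p := -a) (Or.inl (ne_of_gt hst))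
  have h3 := hb3.rpow_const (p := -a/2) (Or.inl (ne_of_gt h4t))
  have h4 := hb4.rpow_const (p := -a) (Or.inl (ne_of_gt h2t))
  have h5 := hb5.rpow_const (p := -a) (Or.inl (ne_of_gt h2t1))
  have H := ((((h1.sub (h2.const_mul 2)).add (h3.const_mul 2)).sub h4).add h5)
  have H2 : HasDerivAt (gamma2 N)
      (-(2*t) * (-a) * (1 - t ^ 2) ^ (-a - 1)
        - 2 * (Real.sqrt 2 * (-a) * (Real.sqrt 2 * t) ^ (-a - 1))
        + 2 * (4*t^3 * (-a/2) * (t ^ 4 + 1) ^ (-a/2 - 1))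
        - 2 * (-a) * (2 * t) ^ (-a - 1)
        + 2*t * (-a) * (t ^ 2 + 1) ^ (-a - 1)) t := H
  rw [H2.deriv]
  set X := (1 - t ^ 2) ^ (-a - 1) with hX
  set Y := (Real.sqrt 2 * t) ^ (-a - 1) with hY
  set Z := (t ^ 4 + 1) ^ (-a/2 - 1) with hZ
  set W := (2 * t) ^ (-a - 1) with hW
  set V := (t ^ 2 + 1) ^ (-a - 1) with hV
  have hXpos : 0 < X := Real.rpow_pos_of_pos h1t _
  have hQ : (0:ℝ) < (2:ℝ) ^ (a/2) := Real.rpow_pos_of_pos (by norm_num) _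
  have hR : (0:ℝ) < t ^ (a+1) := Real.rpow_pos_of_pos ht0 _
  have h2key : 4*a*t^3*Z ≤ 2*Real.sqrt 2*a*Y := by
    have hY2 : 2*Real.sqrt 2*a*Y = 2*a*((2:ℝ) ^ (-(a/2)) * t ^ (-a-1)) := by
      rw [hY, Real.mul_rpow (Real.sqrt_nonneg 2) ht0.le]
      have hss : Real.sqrt 2 * (Real.sqrt 2) ^ (-a-1) = (2:ℝ) ^ (-(a/2)) := by
        nth_rewrite 1 [← Real.rpow_one (Real.sqrt 2)]
        rw [← Real.rpow_add sqrt2_pos, Real.sqrt_eq_rpow,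
          ← Real.rpow_mul (by norm_num : (0:ℝ) ≤ 2)]
        congr 1; ring
      calc 2*Real.sqrt 2*a*((Real.sqrt 2) ^ (-a-1) * t ^ (-a-1))
          = 2*a*((Real.sqrt 2 * (Real.sqrt 2) ^ (-a-1)) * t ^ (-a-1)) := by ring
        _ = 2*a*((2:ℝ) ^ (-(a/2)) * t ^ (-a-1)) := by rw [hss]
    rw [hY2]
    have key : 4*t^3*((2:ℝ) ^ (a/2) * t ^ (a+1)) ≤ 2*(t^4+1) ^ (a/2+1) := by
      have e1 : (t:ℝ)^(3:ℕ) * t ^ (a+1) = t ^ (a+4) := by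
        rw [← Real.rpow_natCast t 3, ← Real.rpow_add ht0]
        congr 1; push_cast; ring
      have s2 : 2*t^2 ≤ t^4+1 := by nlinarith [sq_nonneg (t^2 - 1)]
      have s3 : (2*t^2 : ℝ) ^ (a/2+1) ≤ (t^4+1) ^ (a/2+1) :=
        Real.rpow_le_rpow (by positivity) s2 (by linarith)
      have s4 : (2*t^2 : ℝ) ^ (a/2+1) = 2 ^ (a/2+1) * t ^ (a+2) := by
        rw [Real.mul_rpow (by norm_num) (by positivity)]
        congr 1
        rw [← Real.rpow_natCast t 2, ← Real.rpow_mul ht0.le]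
        congr 1; push_cast; ring
      have s5 : t ^ (a+4) ≤ t ^ (a+2) :=
        Real.rpow_le_rpow_of_exponent_ge ht0 ht1.le (by linarith)
      have s6 : (2:ℝ) ^ (a/2+1) = 2 * 2 ^ (a/2) := by
        rw [Real.rpow_add (by norm_num : (0:ℝ) < 2), Real.rpow_one]; ring
      calc 4*t^3*((2:ℝ) ^ (a/2) * t ^ (a+1)) = 4 * 2 ^ (a/2) * (t^(3:ℕ) * t ^ (a+1)) := by ring
        _ = 4 * 2 ^ (a/2) * t ^ (a+4) := by rw [e1]
        _ ≤ 4 * 2 ^ (a/2) * t ^ (a+2) := by nlinarith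
        _ = 2 * (2 ^ (a/2+1) * t ^ (a+2)) := by rw [s6]; ring
        _ = 2 * (2*t^2 : ℝ) ^ (a/2+1) := by rw [s4]
        _ ≤ 2*(t^4+1) ^ (a/2+1) := by linarith
    have hZ' : Z = ((t^4+1) ^ (a/2+1))⁻¹ := by
      rw [hZ, show (-a/2 - 1 : ℝ) = -(a/2+1) from by ring, Real.rpow_neg h4t.le]
    have ht' : t ^ (-a - 1 : ℝ) = (t ^ (a+1))⁻¹ := by
      rw [show (-a - 1 : ℝ) = -(a+1) from by ring, Real.rpow_neg ht0.le]
    have h2' : (2:ℝ) ^ (-(a/2)) = ((2:ℝ) ^ (a/2))⁻¹ := Real.rpow_neg (by norm_num) _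
    have hP : (0:ℝ) < (t^4+1) ^ (a/2+1) := Real.rpow_pos_of_pos h4t _
    rw [hZ', ht', h2']
    have goal' : 4*a*t^3 / ((t^4+1) ^ (a/2+1)) ≤ 2*a / ((2:ℝ) ^ (a/2) * t ^ (a+1)) := by
      rw [div_le_div_iff₀ hP (mul_pos hQ hR)]
      have hmul := mul_le_mul_of_nonneg_left key ha0.le
      nlinarith [hmul]
    calc 4*a*t^3*((t^4+1) ^ (a/2+1))⁻¹
        = 4*a*t^3 / ((t^4+1) ^ (a/2+1)) := (div_eq_mul_inv _ _).symm
      _ ≤ 2*a / ((2:ℝ) ^ (a/2) * t ^ (a+1)) := goal'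
      _ = 2*a*(((2:ℝ) ^ (a/2))⁻¹ * (t ^ (a+1))⁻¹) := by
          rw [div_eq_mul_inv (2*a) (((2:ℝ) ^ (a/2)) * t ^ (a+1)), mul_inv]
  have h3key : 2*a*t*V < 2*a*W := by
    have key : t * (2*t) ^ (a+1) < (t^2+1) ^ (a+1) := by
      have s1 : (2*t:ℝ) ^ (a+1) = 2 ^ (a+1) * t ^ (a+1) := Real.mul_rpow (by norm_num) ht0.le
      have s2 : t * t ^ (a+1) = t ^ (a+2) := by
        nth_rewrite 1 [← Real.rpow_one t]
        rw [← Real.rpow_add ht0]; congr 1; ring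
      have s3 : t ^ (a+2) < t ^ (a+1) :=
        Real.rpow_lt_rpow_of_exponent_gt ht0 ht1 (by linarith)
      have s4 : (2*t:ℝ) ^ (a+1) ≤ (t^2+1) ^ (a+1) :=
        Real.rpow_le_rpow (by positivity) (by nlinarith [sq_nonneg (t-1)]) (by linarith)
      have h2p : (0:ℝ) < (2:ℝ) ^ (a+1) := Real.rpow_pos_of_pos (by norm_num) _
      calc t * (2*t) ^ (a+1) = 2 ^ (a+1) * (t * t ^ (a+1)) := by rw [s1]; ring
        _ = 2 ^ (a+1) * t ^ (a+2) := by rw [s2]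
        _ < 2 ^ (a+1) * t ^ (a+1) := by nlinarith
        _ = (2*t:ℝ) ^ (a+1) := by rw [s1]
        _ ≤ (t^2+1) ^ (a+1) := s4
    have hV' : V = ((t^2+1) ^ (a+1))⁻¹ := by
      rw [hV, show (-a - 1 : ℝ) = -(a+1) from by ring, Real.rpow_neg h2t1.le]
    have hW' : W = ((2*t) ^ (a+1))⁻¹ := by
      rw [hW, show (-a - 1 : ℝ) = -(a+1) from by ring, Real.rpow_neg h2t.le]
    have hP : (0:ℝ) < (t^2+1) ^ (a+1) := Real.rpow_pos_of_pos h2t1 _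
    have hQ2 : (0:ℝ) < (2*t:ℝ) ^ (a+1) := Real.rpow_pos_of_pos h2t _
    rw [hV', hW']
    have hd : t / ((t^2+1) ^ (a+1)) < 1 / ((2*t) ^ (a+1)) := by
      rw [div_lt_div_iff₀ hP hQ2]
      nlinarith [key]
    have h2a : (0:ℝ) < 2*a := by linarith
    calc 2*a*t*((t^2+1) ^ (a+1))⁻¹ = (2*a) * (t / ((t^2+1) ^ (a+1))) := by
          rw [div_eq_mul_inv t ((t^2+1) ^ (a+1))]; ring
      _ < (2*a) * (1 / ((2*t) ^ (a+1))) := mul_lt_mul_of_pos_left hd h2a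
      _ = 2*a*((2*t) ^ (a+1))⁻¹ := by rw [one_div]
  have h1pos : 0 < 2*a*t*X := by positivity
  have e : -(2 * t) * -a * X - 2 * (Real.sqrt 2 * -a * Y) + 2 * (4 * t ^ 3 * (-a / 2) * Z)
      - 2 * -a * W + 2 * t * -a * V
      = 2*a*t*X + (2*Real.sqrt 2*a*Y - 4*a*t^3*Z) + (2*a*W - 2*a*t*V) := by ring
  rw [e]
  linarith [h1pos, h2key, h3key]

private lemma gamma2_val_pos (N : ℕ) (hN : 7 ≤ N) :
    0 < gamma2 N (1 / Real.sqrt 2) := by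
  have ha : (5:ℝ) ≤ (N : ℝ) - 2 := alpha_ge N hN
  set a : ℝ := (N : ℝ) - 2 with ha_def
  have ha0 : (0:ℝ) < a := by linarith
  have hs : Real.sqrt 2 ^ 2 = 2 := Real.sq_sqrt (by norm_num)
  have hmul : Real.sqrt 2 * Real.sqrt 2 = 2 := Real.mul_self_sqrt (by norm_num)
  have ht2 : ((1:ℝ) / Real.sqrt 2) ^ 2 = 1/2 := by
    rw [div_pow, one_pow, hs]
  have ht4 : ((1:ℝ) / Real.sqrt 2) ^ 4 = 1/4 := by
    have h44 : ((1:ℝ) / Real.sqrt 2) ^ 4 = (((1:ℝ) / Real.sqrt 2) ^ 2) ^ 2 := by ring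
    rw [h44, ht2]; norm_num
  have hB : Real.sqrt 2 * (1 / Real.sqrt 2) = 1 := by
    rw [mul_one_div]; exact div_self (ne_of_gt sqrt2_pos)
  have h2t : (2:ℝ) * (1 / Real.sqrt 2) = Real.sqrt 2 := by
    rw [mul_one_div, div_eq_iff (ne_of_gt sqrt2_pos)]
    exact hmul.symm
  show 0 < (1 - (1/Real.sqrt 2) ^ 2) ^ (-a) - 2 * (Real.sqrt 2 * (1/Real.sqrt 2)) ^ (-a) +
    2 * ((1/Real.sqrt 2) ^ 4 + 1) ^ (-a / 2) - (2 * (1/Real.sqrt 2)) ^ (-a) +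
    ((1/Real.sqrt 2) ^ 2 + 1) ^ (-a)
  rw [ht2, ht4, hB, h2t, Real.one_rpow]
  have hA : (32:ℝ) ≤ ((1:ℝ) - 1/2) ^ (-a) := by
    have e : ((1:ℝ) - 1/2) ^ (-a) = 2 ^ a := by
      rw [show ((1:ℝ) - 1/2) = 2⁻¹ from by norm_num,
        Real.inv_rpow (by norm_num), Real.rpow_neg (by norm_num), inv_inv]
    rw [e]
    calc (32:ℝ) = 2 ^ ((5:ℕ):ℝ) := by rw [Real.rpow_natCast]; norm_num
      _ ≤ 2 ^ a := Real.rpow_le_rpow_of_exponent_le one_le_two (by push_cast; linarith)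
  have hC : (0:ℝ) < ((1:ℝ)/4 + 1) ^ (-a/2) := Real.rpow_pos_of_pos (by norm_num) _
  have hD : Real.sqrt 2 ^ (-a) ≤ 1 :=
    Real.rpow_le_one_of_one_le_of_nonpos one_lt_sqrt2.le (by linarith)
  have hE : (0:ℝ) < ((1:ℝ)/2 + 1) ^ (-a) := Real.rpow_pos_of_pos (by norm_num) _
  linarith

private lemma gamma2_tendsto (N : ℕ) (hN : 7 ≤ N) :
    Tendsto (gamma2 N) (𝓝[>] (0:ℝ)) atBot := by
  have ha : (5:ℝ) ≤ (N : ℝ) - 2 := alpha_ge N hN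
  set a : ℝ := (N : ℝ) - 2 with ha_def
  have ha0 : (0:ℝ) < a := by linarith
  have key : ∀ c : ℝ, 0 < c →
      Tendsto (fun t : ℝ => (c * t) ^ (-a)) (𝓝[>] (0:ℝ)) atTop := by
    intro c hc
    have hmap : Tendsto (fun t : ℝ => c * t) (𝓝[>] (0:ℝ)) (𝓝[>] (0:ℝ)) := by
      apply tendsto_nhdsWithin_of_tendsto_nhds_of_eventually_within
      · have h0 : Tendsto (fun t : ℝ => c * t) (𝓝 (0:ℝ)) (𝓝 (c * 0)) :=
          (continuous_const.mul continuous_id).tendsto 0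
        simpa using h0.mono_left nhdsWithin_le_nhds
      · filter_upwards [self_mem_nhdsWithin] with t ht
        exact mul_pos hc ht
    have hinv : Tendsto (fun t : ℝ => (c * t)⁻¹) (𝓝[>] (0:ℝ)) atTop :=
      tendsto_inv_nhdsGT_zero.comp hmap
    have hpow : Tendsto (fun t : ℝ => ((c * t)⁻¹) ^ a) (𝓝[>] (0:ℝ)) atTop :=
      (tendsto_rpow_atTop ha0).comp hinv
    apply hpow.congr'
    filter_upwards [self_mem_nhdsWithin] with t ht
    have hct : (0:ℝ) < c * t := mul_pos hc ht
    rw [Real.inv_rpow hct.le, ← Real.rpow_neg hct.le]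
  have hinner : Tendsto (fun t : ℝ =>
      ((1 - t^2) ^ (-a) + 2*(t^4+1) ^ (-a/2) + (t^2+1) ^ (-a))
        + (-2) * (Real.sqrt 2 * t) ^ (-a)) (𝓝[>] (0:ℝ)) atBot := by
    apply tendsto_atBot_add_left_of_ge' _ ((3/4:ℝ) ^ (-a) + 3)
    · filter_upwards [Ioo_mem_nhdsGT_of_mem
        (show (0:ℝ) ∈ Ico (0:ℝ) (1/2) from ⟨le_refl 0, by norm_num⟩)] with t ht
      obtain ⟨ht0, ht1⟩ := ht
      have b1 : (1 - t^2 : ℝ) ^ (-a) ≤ (3/4:ℝ) ^ (-a) :=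
        Real.rpow_le_rpow_of_nonpos (by norm_num) (by nlinarith) (by linarith)
      have b2 : (t^4+1 : ℝ) ^ (-a/2) ≤ 1 :=
        Real.rpow_le_one_of_one_le_of_nonpos (by nlinarith) (by linarith)
      have b3 : (t^2+1 : ℝ) ^ (-a) ≤ 1 :=
        Real.rpow_le_one_of_one_le_of_nonpos (by nlinarith) (by linarith)
      linarith
    · exact (tendsto_const_mul_atBot_of_neg (by norm_num : (-2:ℝ) < 0)).2
        (key (Real.sqrt 2) sqrt2_pos)
  have hfull : Tendsto (fun t : ℝ =>
      (((1 - t^2) ^ (-a) + 2*(t^4+1) ^ (-a/2) + (t^2+1) ^ (-a))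
        + (-2) * (Real.sqrt 2 * t) ^ (-a)) + (-1) * (2*t) ^ (-a))
      (𝓝[>] (0:ℝ)) atBot := by
    apply tendsto_atBot_add_right_of_ge' _ (0:ℝ) hinner
    filter_upwards [self_mem_nhdsWithin] with t ht
    have hp : (0:ℝ) < (2*t : ℝ) ^ (-a) :=
      Real.rpow_pos_of_pos (by linarith [mem_Ioi.mp ht]) _
    linarith
  apply hfull.congr'
  filter_upwards [self_mem_nhdsWithin] with t ht
  show _ = gamma2 N t
  unfold gamma2
  rw [← ha_def]
  ring

theorem stmt_7 (N : ℕ) (hN : 7 ≤ N) :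
    Tendsto (gamma2 N) (nhdsWithin 0 (Ioi 0)) atBot ∧
    0 < gamma2 N (1 / Real.sqrt 2) ∧
    ∃ tstar : ℝ, tstar ∈ Ioo (0 : ℝ) (1 / Real.sqrt 2) ∧ gamma2 N tstar = 0 ∧
      (∀ s ∈ Ioo (0 : ℝ) (1 / Real.sqrt 2), gamma2 N s = 0 → s = tstar) ∧
      ∀ t ∈ Ioo tstar 1, 0 < gamma2 N t := by
  have hsm := gamma2_strictMonoOn N hN
  have htb := gamma2_tendsto N hN
  have hval := gamma2_val_pos N hN
  have hhalf : (1:ℝ) / Real.sqrt 2 < 1 := by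
    rw [div_lt_one sqrt2_pos]; exact one_lt_sqrt2
  have hhalf0 : (0:ℝ) < 1 / Real.sqrt 2 := by positivity
  refine ⟨htb, hval, ?_⟩
  have h1 : ∀ᶠ t in 𝓝[>] (0:ℝ), gamma2 N t < 0 := htb.eventually (eventually_lt_atBot 0)
  have h2 : Ioo (0:ℝ) (1/Real.sqrt 2) ∈ 𝓝[>] (0:ℝ) :=
    Ioo_mem_nhdsGT_of_mem ⟨le_refl 0, hhalf0⟩
  obtain ⟨b, hbneg, hb0, hb2⟩ := (h1.and h2).exists
  have hsub : Icc b (1/Real.sqrt 2) ⊆ Ioo 0 1 := fun x hx =>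
    ⟨lt_of_lt_of_le hb0 hx.1, lt_of_le_of_lt hx.2 hhalf⟩
  have hcont' : ContinuousOn (gamma2 N) (Icc b (1/Real.sqrt 2)) :=
    (gamma2_continuousOn N).mono hsub
  obtain ⟨tstar, hts, h0⟩ := intermediate_value_Ioo hb2.le hcont' ⟨hbneg, hval⟩
  have htstar : tstar ∈ Ioo (0:ℝ) (1/Real.sqrt 2) := ⟨lt_trans hb0 hts.1, hts.2⟩
  have htstar1 : tstar ∈ Ioo (0:ℝ) 1 := ⟨htstar.1, lt_trans htstar.2 hhalf⟩
  refine ⟨tstar, htstar, h0, ?_, ?_⟩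
  · intro s hs hs0
    exact hsm.injOn ⟨hs.1, lt_trans hs.2 hhalf⟩ htstar1 (hs0.trans h0.symm)
  · intro t ht
    have hmem : t ∈ Ioo (0:ℝ) 1 := ⟨lt_trans htstar.1 ht.1, ht.2⟩
    have hlt := hsm htstar1 hmem ht.1
    rw [h0] at hlt
    exact hlt
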